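/- arXiv:1702.00622 — 6 statements merged into one kernel-verified Lean document; each statement's English description precedes it below -/
import Mathlib

section
/- Let G be a graph and f : ℕ → ℕ. For each edge e = uv of G, let A(e) denote the set of vertices of G that are adjacent to neither u nor v. Suppose that for every edge e of G, the subgraph of G induced by A(e) has chromatic number at most f(ω(G)). Then χ(G) ≤ C(ω(G), 2)·f(ω(G)) + ω(G), where C(n, 2) = n(n−1)/2 is the binomial coefficient. -/
open SimpleGraph

/-- `G` contains no induced subgraph isomorphic to `H` (graph embeddings are
exactly the inclusions of induced subgraphs). -/
def IndFree {W V : Type*} (H : SimpleGraph W) (G : SimpleGraph V) : Prop :=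
  IsEmpty (H ↪g G)

/-- A set of vertices is independent if its elements are pairwise nonadjacent. -/
def IsIndep {V : Type*} (G : SimpleGraph V) (s : Set V) : Prop :=
  s.Pairwise fun u v => ¬ G.Adj u v

/-- A graph is perfect if every induced subgraph has chromatic number equal to
its clique number. -/
def IsPerfect {V : Type*} (G : SimpleGraph V) : Prop :=
  ∀ S : Set V, (G.induce S).chromaticNumber = ((G.induce S).cliqueNum : ℕ∞)

/-- `2K₂`: two disjoint edges `{0,1}` and `{2,3}`. -/
def graph2K2 : SimpleGraph (Fin 4) :=
  SimpleGraph.fromRel (fun a b => (a = 0 ∧ b = 1) ∨ (a = 2 ∧ b = 3))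

/-- The path `P₄`. -/
def graphP4 : SimpleGraph (Fin 4) :=
  SimpleGraph.fromRel (fun a b => (a = 0 ∧ b = 1) ∨ (a = 1 ∧ b = 2) ∨ (a = 2 ∧ b = 3))

/-- The path `P₃`. -/
def graphP3 : SimpleGraph (Fin 3) :=
  SimpleGraph.fromRel (fun a b => (a = 0 ∧ b = 1) ∨ (a = 1 ∧ b = 2))

/-- `P₄ ∪ K₁`: a path on `{0,1,2,3}` plus the isolated vertex `4`. -/
def graphP4K1 : SimpleGraph (Fin 5) :=
  SimpleGraph.fromRel (fun a b => (a = 0 ∧ b = 1) ∨ (a = 1 ∧ b = 2) ∨ (a = 2 ∧ b = 3))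

/-- The cycle `C₄`. -/
def graphC4 : SimpleGraph (Fin 4) :=
  SimpleGraph.fromRel
    (fun a b => (a = 0 ∧ b = 1) ∨ (a = 1 ∧ b = 2) ∨ (a = 2 ∧ b = 3) ∨ (a = 3 ∧ b = 0))

/-- The gem `K₁ + P₄`: a path on `{0,1,2,3}` plus the universal vertex `4`. -/
def graphGem : SimpleGraph (Fin 5) :=
  SimpleGraph.fromRel
    (fun a b => (a = 0 ∧ b = 1) ∨ (a = 1 ∧ b = 2) ∨ (a = 2 ∧ b = 3) ∨ (a ≠ 4 ∧ b = 4))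

/-- The wheel `K₁ + C₄`: a 4-cycle on `{0,1,2,3}` plus the universal vertex `4`. -/
def graphWheel : SimpleGraph (Fin 5) :=
  SimpleGraph.fromRel
    (fun a b => (a = 0 ∧ b = 1) ∨ (a = 1 ∧ b = 2) ∨ (a = 2 ∧ b = 3) ∨ (a = 3 ∧ b = 0) ∨
      (a ≠ 4 ∧ b = 4))

/-- `P₂ ∪ P₃`: the edge `{0,1}` together with the path `2 - 3 - 4`. -/
def graphP2P3 : SimpleGraph (Fin 5) :=
  SimpleGraph.fromRel (fun a b => (a = 0 ∧ b = 1) ∨ (a = 2 ∧ b = 3) ∨ (a = 3 ∧ b = 4))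

/-- `P₂ ∪ P₄`: the edge `{0,1}` together with the path `2 - 3 - 4 - 5`. -/
def graphP2P4 : SimpleGraph (Fin 6) :=
  SimpleGraph.fromRel
    (fun a b => (a = 0 ∧ b = 1) ∨ (a = 2 ∧ b = 3) ∨ (a = 3 ∧ b = 4) ∨ (a = 4 ∧ b = 5))

/-- `HVN`: `K₄` on `{0,1,2,3}` plus a vertex `4` adjacent to exactly `0` and `1`. -/
def graphHVN : SimpleGraph (Fin 5) :=
  SimpleGraph.fromRel (fun a b => (a < 4 ∧ b < 4) ∨ (a = 4 ∧ (b = 0 ∨ b = 1)))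

/-- `K₅ - e`: the complete graph on 5 vertices minus the edge `{0,1}`. -/
def graphK5e : SimpleGraph (Fin 5) :=
  SimpleGraph.fromRel (fun a b => ¬((a = 0 ∧ b = 1) ∨ (a = 1 ∧ b = 0)))

/-- The diamond `K₄ - e`: the complete graph on 4 vertices minus the edge `{0,2}`. -/
def graphDiamond : SimpleGraph (Fin 4) :=
  SimpleGraph.fromRel (fun a b => ¬((a = 0 ∧ b = 2) ∨ (a = 2 ∧ b = 0)))

/-- The paw: a triangle `{0,1,2}` plus a pendant vertex `3` adjacent to `0`. -/
def graphPaw : SimpleGraph (Fin 4) :=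
  SimpleGraph.fromRel
    (fun a b => (a = 0 ∧ b = 1) ∨ (a = 1 ∧ b = 2) ∨ (a = 0 ∧ b = 2) ∨ (a = 0 ∧ b = 3))

/-- `K₅`. -/
def graphK5 : SimpleGraph (Fin 5) := ⊤

/-- The join `K₁ + H`: `H` together with a new universal vertex `none`. -/
def joinK1 {W : Type*} (H : SimpleGraph W) : SimpleGraph (Option W) :=
  SimpleGraph.fromRel
    (fun a b => (∃ u v, a = some u ∧ b = some v ∧ H.Adj u v) ∨ a = none)

/-- A pseudo-split graph is a `(2K₂, C₄)`-free graph. -/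
def IsPseudoSplit {V : Type*} (G : SimpleGraph V) : Prop :=
  IndFree graph2K2 G ∧ IndFree graphC4 G

/-!
Fix a maximum clique `K`, of size `ω`. Every vertex `x` has a non-neighbour in `K` (counting `x`
itself when `x ∈ K`), since otherwise `K ∪ {x}` would be a larger clique. If `x` has two
non-neighbours `u, v ∈ K`, then `x ∈ A(uv)`, and the `C(ω, 2)` sets `A(uv)` are each coloured with
`f ω` colours. Otherwise `x` has exactly one non-neighbour `w ∈ K`; the vertices of this kind for a
fixed `w` form an independent set, because two adjacent ones together with `K \ {w}` would form a
clique of size `ω + 1`. These `ω` independent sets get one colour each.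
-/

namespace Finset

theorem exists_pair_or_exists_iff_eq {α : Type*} {K : Finset α} {P : α → Prop}
    (h : ∃ u ∈ K, P u) :
    (∃ p ∈ K.powersetCard 2, ∀ u ∈ p, P u) ∨ ∃ w ∈ K, ∀ u ∈ K, P u ↔ u = w := by
  classical
  rcases lt_or_ge 1 #(K.filter P) with h2 | h1
  · obtain ⟨a, b, ha, hb, hab⟩ := one_lt_card_iff.mp h2
    rw [mem_filter] at ha hb
    refine .inl ⟨{a, b}, mem_powersetCard.mpr ⟨?_, card_pair hab⟩, ?_⟩
    · simp [insert_subset_iff, ha.1, hb.1]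
    · simp [ha.2, hb.2]
  · obtain ⟨w, hw⟩ := card_eq_one.mp (h1.antisymm (card_pos.mpr (filter_nonempty_iff.mpr h)))
    refine .inr ⟨w, (mem_filter.mp (hw ▸ mem_singleton_self w)).1, fun u hu => ?_⟩
    rw [← mem_singleton, ← hw, mem_filter, and_iff_right hu]

end Finset

namespace SimpleGraph

open Finset

variable {V : Type*} {G : SimpleGraph V}

theorem colorable_sum_of_forall_exists_mem {ι : Type*} (I : Finset ι) (s : ι → Set V)
    (n : ι → ℕ) (hcol : ∀ i ∈ I, (G.induce (s i)).Colorable (n i))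
    (hcover : ∀ x, ∃ i ∈ I, x ∈ s i) : G.Colorable (∑ i ∈ I, n i) := by
  choose idx hidxI hidx using hcover
  have C : ∀ i : I, (G.induce (s i)).Coloring (Fin (n i)) := fun i => (hcol i i.2).some
  have hvalid : ∀ {x y : V}, G.Adj x y → ∀ (i j : I) (hx : x ∈ s i) (hy : y ∈ s j),
      (⟨i, C i ⟨x, hx⟩⟩ : Σ i : I, Fin (n i)) ≠ ⟨j, C j ⟨y, hy⟩⟩ := by
    rintro x y hxy i j hx hy h
    obtain ⟨rfl, h⟩ := Sigma.mk.inj h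
    exact (C i).valid (v := ⟨x, hx⟩) (w := ⟨y, hy⟩) hxy (eq_of_heq h)
  let C' : G.Coloring (Σ i : I, Fin (n i)) :=
    Coloring.mk (fun x => ⟨⟨idx x, hidxI x⟩, C _ ⟨x, hidx x⟩⟩) fun hxy => hvalid hxy _ _ _ _
  have := C'.colorable
  rwa [Fintype.card_sigma, sum_coe_sort I fun i => Fintype.card (Fin (n i)),
    sum_congr rfl fun i _ => Fintype.card_fin (n i)] at this

theorem IsIndepSet.colorable_induce_one {s : Set V} (hs : G.IsIndepSet s) :
    (G.induce s).Colorable 1 :=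
  colorable_one_iff.mpr <| by
    ext x y
    simp only [comap_adj, Function.Embedding.coe_subtype, bot_adj, iff_false]
    exact fun h => hs x.2 y.2 (G.ne_of_adj h) h

theorem not_isNClique_cliqueNum_add_one [Finite V] {s : Finset V} :
    ¬ G.IsNClique (G.cliqueNum + 1) s := fun hs => by
  have := hs.isClique.card_le_cliqueNum
  rw [hs.card_eq] at this
  omega

variable [Finite V] {K : Finset V}

theorem IsNClique.exists_not_adj_of_cliqueNum (hK : G.IsNClique G.cliqueNum K) (x : V) :
    ∃ u ∈ K, ¬ G.Adj u x := by
  classical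
  by_contra! h
  exact not_isNClique_cliqueNum_add_one (hK.insert fun u hu => (h u hu).symm)

theorem IsNClique.isIndepSet_setOf_not_adj_iff_eq (hK : G.IsNClique G.cliqueNum K) {w : V}
    (hw : w ∈ K) : G.IsIndepSet {x | ∀ u ∈ K, ¬ G.Adj u x ↔ u = w} := by
  classical
  intro x hx y hy _ hxy
  have hyK : ∀ u ∈ K \ {w}, G.Adj y u := fun u hu => by
    rw [mem_sdiff, mem_singleton] at hu
    exact (not_not.mp (mt (hy u hu.1).mp hu.2)).symm
  have hxK : ∀ u ∈ insert y (K.erase w), G.Adj x u := fun u hu => by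
    rcases mem_insert.mp hu with rfl | hu
    · exact hxy
    · rw [mem_erase] at hu
      exact (not_not.mp (mt (hx u hu.2).mp hu.1)).symm
  exact not_isNClique_cliqueNum_add_one ((hK.insert_erase hyK hw).insert hxK)

end SimpleGraph

/-- If for every edge `uv` of `G` the set `A(e)` of vertices adjacent
to neither `u` nor `v` induces a subgraph of chromatic number at most `f(ω(G))`,
then `χ(G) ≤ C(ω(G), 2)·f(ω(G)) + ω(G)`. -/
theorem stmt12 {V : Type*} [Fintype V] (G : SimpleGraph V) (f : ℕ → ℕ)
    (hA : ∀ u v : V, G.Adj u v →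
      (G.induce {x | ¬ G.Adj u x ∧ ¬ G.Adj v x}).chromaticNumber ≤
        ((f G.cliqueNum : ℕ) : ℕ∞)) :
    G.chromaticNumber ≤
      ((Nat.choose G.cliqueNum 2 * f G.cliqueNum + G.cliqueNum : ℕ) : ℕ∞) := by
  classical
  obtain ⟨K, hK⟩ := G.exists_isNClique_cliqueNum
  let s : Finset V ⊕ V → Set V := Sum.elim (fun p => {x | ∀ u ∈ p, ¬ G.Adj u x})
    (fun w => {x | ∀ u ∈ K, ¬ G.Adj u x ↔ u = w})
  let n : Finset V ⊕ V → ℕ := Sum.elim (fun _ => f G.cliqueNum) (fun _ => 1)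
  have hsum : ∑ i ∈ (K.powersetCard 2).disjSum K, n i =
      Nat.choose G.cliqueNum 2 * f G.cliqueNum + G.cliqueNum := by
    simp [n, Finset.sum_disjSum, hK.card_eq, mul_comm]
  rw [chromaticNumber_le_iff_colorable, ← hsum]
  refine colorable_sum_of_forall_exists_mem _ s n ?_ fun x => ?_
  · rintro (p | w) hi
    · obtain ⟨hpK, hp⟩ := Finset.mem_powersetCard.mp (Finset.inl_mem_disjSum.mp hi)
      obtain ⟨u, v, huv, rfl⟩ := Finset.card_eq_two.mp hp
      have hAuv : {x | ∀ w ∈ ({u, v} : Finset V), ¬ G.Adj w x} =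
          {x | ¬ G.Adj u x ∧ ¬ G.Adj v x} := by
        ext; simp
      change (G.induce {x | ∀ w ∈ ({u, v} : Finset V), ¬ G.Adj w x}).Colorable (f G.cliqueNum)
      rw [hAuv, ← chromaticNumber_le_iff_colorable]
      exact hA u v (hK.isClique (hpK (by simp)) (hpK (by simp)) huv)
    · exact (hK.isIndepSet_setOf_not_adj_iff_eq
        (Finset.inr_mem_disjSum.mp hi)).colorable_induce_one
  · rcases Finset.exists_pair_or_exists_iff_eq (hK.exists_not_adj_of_cliqueNum x) with
      ⟨p, hp, hx⟩ | ⟨w, hw, hx⟩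
    · exact ⟨.inl p, Finset.inl_mem_disjSum.mpr hp, hx⟩
    · exact ⟨.inr w, Finset.inr_mem_disjSum.mpr hw, hx⟩
end

section
/- Let G be a 2K2-free graph. Then χ(G) ≤ C(ω(G)+1, 2) = ω(G)(ω(G)+1)/2. -/
open SimpleGraph

/-! Wagon's argument. Fix a maximum clique `K`; every vertex `v` has a non-neighbour in `K`, so
it can be coloured by an unordered pair `{a, b}` of non-neighbours in `K`, with `a = b` only when
`a` is its unique non-neighbour there. Two adjacent vertices with the same off-diagonal colour
`{a, b}` would form an induced `2K₂` with the edge `ab`; two with the same diagonal colour `{a}`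
would extend `K \ {a}` to a clique larger than `K`. There are `C(ω + 1, 2)` such pairs. -/

theorem Finset.Nonempty.exists_mem_mem_eq_singleton_of_eq {α : Type*} {s : Finset α}
    (hs : s.Nonempty) : ∃ a ∈ s, ∃ b ∈ s, a = b → s = {a} := by
  obtain ⟨a, ha⟩ := hs
  rcases s.eq_singleton_or_nontrivial ha with rfl | ⟨a, ha, b, hb, hab⟩
  · exact ⟨a, ha, a, ha, fun _ => rfl⟩
  · exact ⟨a, ha, b, hb, fun h => absurd h hab⟩

namespace SimpleGraph

variable {V : Type*} {G : SimpleGraph V}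

theorem IndFree.false_of_anticomplete_edges (hG : IndFree graph2K2 G) {u v a b : V}
    (huv : G.Adj u v) (hab : G.Adj a b) (hua : ¬G.Adj u a) (hub : ¬G.Adj u b)
    (hva : ¬G.Adj v a) (hvb : ¬G.Adj v b) : False := by
  have hau : ¬G.Adj a u := fun h => hua h.symm
  have hbu : ¬G.Adj b u := fun h => hub h.symm
  have hav : ¬G.Adj a v := fun h => hva h.symm
  have hbv : ¬G.Adj b v := fun h => hvb h.symm
  have hadj : ∀ x y : Fin 4, G.Adj (![u, v, a, b] x) (![u, v, a, b] y) ↔ graph2K2.Adj x y := by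
    intro x y
    fin_cases x <;> fin_cases y <;> simp [graph2K2, *, huv.symm, hab.symm]
  have hinj : Function.Injective ![u, v, a, b] := by
    have := huv.ne; have := hab.ne
    have hua' : u ≠ a := by rintro rfl; exact hub hab
    have hub' : u ≠ b := by rintro rfl; exact hua hab.symm
    have hva' : v ≠ a := by rintro rfl; exact hvb hab
    have hvb' : v ≠ b := by rintro rfl; exact hva hab.symm
    intro x y hxy
    fin_cases x <;> fin_cases y <;> simp_all [eq_comm]
  exact hG.false ⟨⟨_, hinj⟩, hadj _ _⟩

variable [Finite V] {K : Finset V}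

theorem IsMaximumClique.exists_not_adj (hK : G.IsMaximumClique K) (v : V) :
    ∃ x ∈ K, ¬G.Adj v x := by
  classical
  by_contra! h
  have hv : v ∉ K := fun hv => G.loopless.irrefl v (h v hv)
  have := hK.maximum (insert v K) <| by
    rw [Finset.coe_insert]; exact hK.isClique.insert fun x hx _ => h x hx
  rw [Finset.card_insert_of_notMem hv] at this
  omega

theorem IsMaximumClique.not_adj_of_forall_not_adj_eq (hK : G.IsMaximumClique K) {u v a : V}
    (hu : ∀ x ∈ K, ¬G.Adj u x → x = a) (hv : ∀ x ∈ K, ¬G.Adj v x → x = a) : ¬G.Adj u v := by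
  classical
  intro huv
  have hadj : ∀ w, (∀ x ∈ K, ¬G.Adj w x → x = a) → ∀ x ∈ K.erase a, w ≠ x → G.Adj w x :=
    fun w hw x hx _ => by_contra fun h =>
      Finset.ne_of_mem_erase hx (hw x (Finset.mem_of_mem_erase hx) h)
  have hnotMem : ∀ w, (∀ x ∈ K, ¬G.Adj w x → x = a) → w ∉ K.erase a :=
    fun w hw hwK => Finset.ne_of_mem_erase hwK <|
      hw w (Finset.mem_of_mem_erase hwK) (G.loopless.irrefl w)
  have hclique : G.IsClique (insert u (insert v (K.erase a)) : Finset V) := by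
    rw [Finset.coe_insert, Finset.coe_insert]
    refine (hK.isClique.subset (Finset.erase_subset a K)).insert (hadj v hv) |>.insert ?_
    rintro x (rfl | hx) hux
    exacts [huv, hadj u hu x hx hux]
  have := hK.maximum _ hclique
  rw [Finset.card_insert_of_notMem, Finset.card_insert_of_notMem (hnotMem v hv)] at this
  · have := Finset.pred_card_le_card_erase (a := a) (s := K)
    omega
  · simpa [huv.ne] using hnotMem u hu

theorem IndFree.colorable_of_isMaximumClique (hG : IndFree graph2K2 G)
    (hK : G.IsMaximumClique K) : G.Colorable ((K.card + 1).choose 2) := by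
  classical
  have hpick : ∀ v, ∃ a : K, ¬G.Adj v a ∧ ∃ b : K, ¬G.Adj v b ∧
      (a = b → ∀ x ∈ K, ¬G.Adj v x → x = a) := by
    intro v
    obtain ⟨x, hxK, hx⟩ := hK.exists_not_adj v
    have hne : ({y : K | ¬G.Adj v y} : Finset K).Nonempty := ⟨⟨x, hxK⟩, by simpa using hx⟩
    obtain ⟨a, ha, b, hb, hab⟩ := hne.exists_mem_mem_eq_singleton_of_eq
    refine ⟨a, by simpa using ha, b, by simpa using hb, fun h x hxK hx => ?_⟩
    have : (⟨x, hxK⟩ : K) ∈ ({a} : Finset K) := hab h ▸ by simpa using hx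
    simpa using congrArg Subtype.val (Finset.mem_singleton.mp this)
  choose a ha b hb hab using hpick
  have hcard : Fintype.card (Sym2 K) = (K.card + 1).choose 2 := by
    rw [Sym2.card, Fintype.card_coe]
  refine hcard ▸ (Coloring.mk (fun v => s(a v, b v)) fun {u v} huv hc => ?_).colorable
  have hnv : ∀ x ∈ s(a u, b u), ¬G.Adj v x := by
    rw [hc]
    intro x hx
    rcases Sym2.mem_iff.mp hx with rfl | rfl
    exacts [ha v, hb v]
  by_cases hdiag : a u = b u
  · have hv : a v = a u ∧ b v = a u := by
      rw [← hdiag, Sym2.eq_iff] at hc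
      tauto
    exact hK.not_adj_of_forall_not_adj_eq (hab u hdiag)
      (hv.1 ▸ hab v (hv.1.trans hv.2.symm)) huv
  · exact hG.false_of_anticomplete_edges huv
      (hK.isClique (a u).2 (b u).2 (Subtype.coe_injective.ne hdiag)) (ha u) (hb u)
      (hnv _ (Sym2.mem_mk_left _ _)) (hnv _ (Sym2.mem_mk_right _ _))

end SimpleGraph

/-- Every `2K₂`-free graph `G` satisfies `χ(G) ≤ C(ω(G)+1, 2)`. -/
theorem stmt13 {V : Type*} [Fintype V] (G : SimpleGraph V)
    (h1 : IndFree graph2K2 G) :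
    G.chromaticNumber ≤ ((Nat.choose (G.cliqueNum + 1) 2 : ℕ) : ℕ∞) := by
  obtain ⟨K, hK⟩ := G.maximumClique_exists
  rw [← G.maximumClique_card_eq_cliqueNum K hK]
  exact (h1.colorable_of_isMaximumClique hK).chromaticNumber_le
end

section
/- Let G be a (P2 ∪ P4)-free graph. Then χ(G) ≤ (ω(G)³ − ω(G)² + 2·ω(G)) / 2. -/
open SimpleGraph

/-!
Fix a maximum clique `K`, of size `ω`. Every vertex has a non-neighbour in `K`, so it can be
filed under an unordered pair `{k, l}` of non-neighbours in `K`, with `k = l` only when `k` is its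
unique non-neighbour there. A class with `k = l` is independent: two adjacent vertices in it,
together with `K - k`, would form a clique of size `ω + 1`. A class with `k ≠ l` has no edge to
the edge `kl`, so `(P₂ ∪ P₄)`-freeness makes it `P₄`-free, hence `ω`-colourable: in a `P₄`-free
graph every maximal independent set meets every maximal clique (Seinsche), so removing a maximum
independent set lowers the clique number. Colouring the classes with disjoint palettes uses
`ω + C(ω, 2) · ω = (ω³ − ω² + 2ω) / 2` colours.
-/

namespace SimpleGraph

variable {V : Type*} {G : SimpleGraph V}

def Embedding.sumElim {W₁ W₂ : Type*} {H₁ : SimpleGraph W₁} {H₂ : SimpleGraph W₂}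
    (f : H₁ ↪g G) (g : H₂ ↪g G) (hne : ∀ a b, f a ≠ g b) (hadj : ∀ a b, ¬G.Adj (f a) (g b)) :
    H₁ ⊕g H₂ ↪g G where
  toFun := Sum.elim f g
  inj' := by
    rintro (a | a) (b | b) h
    · simp_all
    · exact absurd h (hne a b)
    · exact absurd h.symm (hne b a)
    · simp_all
  map_rel_iff' {x y} := by
    change G.Adj (Sum.elim f g x) (Sum.elim f g y) ↔ _
    rcases x with a | a <;> rcases y with b | b
    · simp
    · simpa using hadj a b
    · simpa using fun h => hadj b a h.symm
    · simp

def Embedding.ofAdj {u v : V} (h : G.Adj u v) : (⊤ : SimpleGraph (Fin 2)) ↪g G where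
  toFun := ![u, v]
  inj' i j := by fin_cases i <;> fin_cases j <;> simp [h.ne, h.ne.symm]
  map_rel_iff' {i j} := by
    change G.Adj (![u, v] i) (![u, v] j) ↔ _
    fin_cases i <;> fin_cases j <;> simp [h, h.symm]

def sumIsoGraphP2P4 : (⊤ : SimpleGraph (Fin 2)) ⊕g graphP4 ≃g graphP2P4 where
  toEquiv := finSumFinEquiv
  map_rel_iff' {x y} := by
    rcases x with a | a <;> rcases y with b | b <;> fin_cases a <;> fin_cases b <;>
      simp [graphP2P4, graphP4] <;> decide

theorem colorable_sum_of_iUnion_eq_univ {ι : Type*} [Fintype ι] {A : ι → Set V}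
    (hA : ⋃ i, A i = Set.univ) {k : ι → ℕ} (hk : ∀ i, (G.induce (A i)).Colorable (k i)) :
    G.Colorable (∑ i, k i) := by
  choose p hp using fun v => Set.mem_iUnion.1 (hA.symm ▸ Set.mem_univ v)
  let c i := (hk i).some
  have hvalid : ∀ {v w} i j (hv : v ∈ A i) (hw : w ∈ A j), G.Adj v w →
      (⟨i, c i ⟨v, hv⟩⟩ : Σ i, Fin (k i)) ≠ ⟨j, c j ⟨w, hw⟩⟩ := by
    rintro v w i j hv hw hvw hcol
    obtain ⟨rfl, hcol⟩ := Sigma.mk.inj_iff.1 hcol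
    exact (c i).valid (by simpa using hvw) (eq_of_heq hcol)
  simpa using (Coloring.mk _ fun hvw => hvalid (p _) (p _) (hp _) (hp _) hvw).colorable

theorem IsIndepSet.colorable_induce {S : Set V} (hS : G.IsIndepSet S) :
    (G.induce S).Colorable 1 :=
  colorable_one_iff.2 <| by
    ext ⟨v, hv⟩ ⟨w, hw⟩
    simpa using fun hvw => hS hv hw (G.ne_of_adj hvw) hvw

variable (G) in
def nonNeighborPiece (K : Finset V) (z : Sym2 K) : Set V :=
  {x | (∀ k ∈ z, ¬G.Adj x k) ∧ (z.IsDiag → ∀ k : K, k ∉ z → G.Adj x k)}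

theorem iUnion_nonNeighborPiece {K : Finset V} (hK : Maximal G.IsClique (K : Set V)) :
    ⋃ z, G.nonNeighborPiece K z = Set.univ := by
  refine Set.eq_univ_of_forall fun x => Set.mem_iUnion.2 ?_
  obtain ⟨k, hk⟩ : ∃ k : K, ¬G.Adj x k := by
    by_contra! hall
    have hxK := hK.mem_of_prop_insert (hK.prop.insert fun k hk _ => hall ⟨k, hk⟩)
    exact G.irrefl (hall ⟨x, hxK⟩)
  by_cases hl : ∃ l, l ≠ k ∧ ¬G.Adj x l
  · obtain ⟨l, hlk, hl⟩ := hl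
    exact ⟨s(k, l), by simp [nonNeighborPiece, hk, hl, hlk.symm]⟩
  · push Not at hl
    exact ⟨s(k, k), by simpa [nonNeighborPiece, hk] using fun a ha hne => hl ⟨a, ha⟩ hne⟩

theorem isIndepSet_nonNeighborPiece [Finite V] {K : Finset V} (hK : G.IsMaximumClique K)
    {z : Sym2 K} (hz : z.IsDiag) : G.IsIndepSet (G.nonNeighborPiece K z) := by
  classical
  induction z using Sym2.ind with | h k l =>
  obtain rfl : k = l := Sym2.mk_isDiag_iff.1 hz
  intro x hx y hy hxy hadj
  have hadjK : ∀ x ∈ G.nonNeighborPiece K s(k, k), ∀ m ∈ K.erase k, G.Adj x m :=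
    fun x hx m hm => hx.2 rfl ⟨m, Finset.mem_of_mem_erase hm⟩ <| by
      simpa [Subtype.ext_iff] using Finset.ne_of_mem_erase hm
  have hxK := hadjK x hx
  have hyK := hadjK y hy
  have hclique : G.IsClique (insert x (insert y (K.erase k)) : Finset V) := by
    rw [Finset.coe_insert, Finset.coe_insert]
    refine ((hK.isClique.subset (Finset.erase_subset _ _)).insert fun m hm _ => hyK m hm).insert ?_
    rintro m (rfl | hm) _
    exacts [hadj, hxK m hm]
  have hcard := hK.maximum _ hclique
  rw [Finset.card_insert_of_notMem, Finset.card_insert_of_notMem,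
    Finset.card_erase_of_mem k.2] at hcard
  · have := Finset.card_pos.2 ⟨_, k.2⟩
    omega
  · exact fun hy => G.irrefl (hyK y hy)
  · simp only [Finset.mem_insert, not_or]
    exact ⟨hxy, fun hx => G.irrefl (hxK x hx)⟩

end SimpleGraph

theorem Sym2.sum_ite_isDiag {α : Type*} [Fintype α] [DecidableEq α] (a b : ℕ) :
    ∑ z : Sym2 α, (if z.IsDiag then a else b) =
      Fintype.card α * a + (Fintype.card α).choose 2 * b := by
  rw [Finset.sum_ite, Finset.sum_const, Finset.sum_const, smul_eq_mul, smul_eq_mul,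
    ← Fintype.card_subtype, ← Fintype.card_subtype, Sym2.card_subtype_diag,
    Sym2.card_subtype_not_diag]

theorem Nat.cube_sub_sq_add_two_mul_div_two (n : ℕ) :
    (n ^ 3 - n ^ 2 + 2 * n) / 2 = n + n.choose 2 * n := by
  have hchoose : n * (n - 1) = 2 * n.choose 2 := by
    rw [Nat.choose_two_right, Nat.mul_div_cancel' (Nat.even_mul_pred_self n).two_dvd]
  have hcube : n ^ 3 - n ^ 2 = n * (n * (n - 1)) := by
    rcases n with _ | m
    · simp
    · rw [Nat.add_sub_cancel]
      exact Nat.sub_eq_of_eq_add (by ring)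
  rw [hcube, hchoose, show n * (2 * n.choose 2) + 2 * n = 2 * (n + n.choose 2 * n) by ring,
    Nat.mul_div_cancel_left _ two_pos]

namespace IndFree

variable {V : Type*} {G : SimpleGraph V}

theorem of_embedding {W U : Type*} {H : SimpleGraph W} {G' : SimpleGraph U}
    (h : IndFree H G) (f : G' ↪g G) : IndFree H G' :=
  ⟨fun e => h.false (f.comp e)⟩

theorem false_of_induced_graphP4 (h : IndFree graphP4 G) {a b c d : V} (hab : G.Adj a b)
    (hbc : G.Adj b c) (hcd : G.Adj c d) (hac : ¬G.Adj a c) (had : ¬G.Adj a d)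
    (hbd : ¬G.Adj b d) : False := by
  let f : Fin 4 → V := ![a, b, c, d]
  have hadj : ∀ i j, G.Adj (f i) (f j) ↔ graphP4.Adj i j := by
    intro i j
    fin_cases i <;> fin_cases j <;>
      simp [f, graphP4, hab, hbc, hcd, hab.symm, hbc.symm, hcd.symm, hac, had, hbd,
        G.adj_comm c a, G.adj_comm d a, G.adj_comm d b]
  -- distinct vertices of `P₄` have distinct neighbourhoods, so `f` is injective
  have htwinFree : ∀ i j, (∀ k, graphP4.Adj i k ↔ graphP4.Adj j k) → i = j := by
    unfold graphP4; decide
  have hf : Function.Injective f := fun i j hij =>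
    htwinFree i j fun k => by rw [← hadj, ← hadj, hij]
  exact h.false ⟨⟨f, hf⟩, hadj _ _⟩

theorem inter_nonempty_of_maximal [Finite V] (h : IndFree graphP4 G) {S T : Set V}
    (hS : Maximal G.IsIndepSet S) (hT : Maximal G.IsClique T) (hTne : T.Nonempty) :
    (S ∩ T).Nonempty := by
  by_contra hST
  have hdisj : ∀ v ∈ T, v ∉ S := fun v hvT hvS => hST ⟨v, hvS, hvT⟩
  have hdom : ∀ v ∉ S, ∃ s ∈ S, G.Adj v s := by
    intro v hv
    by_contra! hno
    exact hv (hS.mem_of_prop_insert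
      (hS.prop.insert fun s hs _ => ⟨hno s hs, fun h => hno s hs h.symm⟩))
  have hcodom : ∀ v ∉ T, ∃ t ∈ T, ¬G.Adj v t := by
    intro v hv
    by_contra! hall
    exact hv (hT.mem_of_prop_insert (hT.prop.insert fun t ht _ => hall t ht))
  obtain ⟨c₀, hc₀⟩ := hTne
  obtain ⟨s₀, hs₀, -⟩ := hdom c₀ (hdisj c₀ hc₀)
  obtain ⟨s, hs, hmax⟩ := Set.exists_max_image S (fun s => (T ∩ G.neighborSet s).ncard)
    S.toFinite ⟨s₀, hs₀⟩
  obtain ⟨c', hc', hsc'⟩ := hcodom s fun hsT => hdisj s hsT hs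
  obtain ⟨s', hs', hc's'⟩ := hdom c' (hdisj c' hc')
  -- `s` has the most neighbours in `T`, and `c'` is a neighbour of `s'` but not of `s`
  obtain ⟨c, hc, hsc, hs'c⟩ : ∃ c ∈ T, G.Adj s c ∧ ¬G.Adj s' c := by
    by_contra! hsub
    have hle : T ∩ G.neighborSet s ⊆ T ∩ G.neighborSet s' := fun x hx => ⟨hx.1, hsub x hx.1 hx.2⟩
    have hlt := (Set.ssubset_iff_of_subset hle).2 ⟨c', ⟨hc', hc's'.symm⟩, fun hc's => hsc' hc's.2⟩
    exact (Set.ncard_lt_ncard hlt).not_ge (hmax s' hs')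
  have hcc' : c ≠ c' := by rintro rfl; exact hsc' hsc
  have hss' : s ≠ s' := by rintro rfl; exact hsc' hc's'.symm
  -- `s - c - c' - s'` is an induced `P₄`
  exact h.false_of_induced_graphP4 hsc (hT.prop hc hc' hcc') hc's' hsc' (hS.prop hs hs' hss')
    fun h => hs'c h.symm

theorem cliqueNum_induce_compl_lt [Finite V] [Nonempty V] (h : IndFree graphP4 G)
    {S : Set V} (hS : Maximal G.IsIndepSet S) : (G.induce Sᶜ).cliqueNum < G.cliqueNum := by
  obtain ⟨t, ht⟩ := (G.induce Sᶜ).exists_isNClique_cliqueNum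
  rw [isNClique_induce_iff] at ht
  by_contra! hle
  have hmax : G.IsMaximumClique (t.map (.subtype _)) :=
    ⟨ht.isClique, fun u hu => ht.card_eq ▸ hu.card_le_cliqueNum.trans hle⟩
  have hne : (t.map (.subtype _) : Set V).Nonempty := by
    obtain ⟨v⟩ := ‹Nonempty V›
    have := IsClique.card_le_cliqueNum (G := G) (t := {v}) (tc := by simp)
    rw [Finset.coe_nonempty, ← Finset.card_pos, ht.card_eq]
    simp only [Finset.card_singleton] at this
    omega
  obtain ⟨v, hvS, hvt⟩ := h.inter_nonempty_of_maximal hS hmax.isMaximalClique hne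
  obtain ⟨⟨w, hw⟩, -, rfl⟩ := Finset.mem_map.1 hvt
  exact hw hvS

theorem colorable_cliqueNum [Finite V] (h : IndFree graphP4 G) : G.Colorable G.cliqueNum := by
  induction hn : G.cliqueNum using Nat.strong_induction_on generalizing V with
  | _ n ih =>
  cases isEmpty_or_nonempty V
  · exact .of_isEmpty n
  obtain ⟨S, hS⟩ := G.maximumIndepSet_exists
  have hlt := hn ▸ h.cliqueNum_induce_compl_lt (hS.isMaximalIndepSet _)
  have hcompl := ih _ hlt (h.of_embedding (Embedding.induce _)) rfl
  have hcol := colorable_sum_of_iUnion_eq_univ (A := fun b => cond b (S : Set V) (↑S)ᶜ)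
    (by rw [← Set.union_eq_iUnion, Set.union_compl_self]) (k := fun b => cond b 1 (n - 1))
    (by rintro (_ | _)
        exacts [hcompl.mono (Nat.le_sub_one_of_lt hlt), hS.isIndepSet.colorable_induce])
  exact hcol.mono (by simp only [Fintype.sum_bool, cond_true, cond_false]; omega)

theorem induce_of_sum {W₁ W₂ : Type*} {H₁ : SimpleGraph W₁} {H₂ : SimpleGraph W₂}
    (h : IndFree (H₁ ⊕g H₂) G) (f : H₁ ↪g G) {A : Set V}
    (hA : ∀ x ∈ A, ∀ a, x ≠ f a ∧ ¬G.Adj x (f a)) : IndFree H₂ (G.induce A) :=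
  ⟨fun g => h.false <| f.sumElim ((Embedding.induce A).comp g)
    (fun a b => (hA _ (g b).2 a).1.symm) fun a b hab => (hA _ (g b).2 a).2 hab.symm⟩

theorem graphP4_induce_of_adj (h : IndFree graphP2P4 G) {u v : V} (huv : G.Adj u v)
    {A : Set V} (hA : ∀ x ∈ A, ¬G.Adj x u ∧ ¬G.Adj x v) : IndFree graphP4 (G.induce A) := by
  have hsum : IndFree ((⊤ : SimpleGraph (Fin 2)) ⊕g graphP4) G :=
    ⟨fun e => h.false (e.comp sumIsoGraphP2P4.symm.toEmbedding)⟩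
  refine hsum.induce_of_sum (Embedding.ofAdj huv) fun x hx i => ?_
  obtain ⟨hxu, hxv⟩ := hA x hx
  fin_cases i
  · exact ⟨by rintro rfl; exact hxv huv, hxu⟩
  · exact ⟨by rintro rfl; exact hxu huv.symm, hxv⟩

theorem colorable_induce_nonNeighborPiece [Finite V] (h : IndFree graphP2P4 G)
    {K : Finset V} (hK : G.IsClique (K : Set V)) {z : Sym2 K} (hz : ¬z.IsDiag) :
    (G.induce (G.nonNeighborPiece K z)).Colorable G.cliqueNum := by
  induction z using Sym2.ind with | h k l =>
  have hkl : (k : V) ≠ l := fun h => hz (Sym2.mk_isDiag_iff.2 (Subtype.ext h))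
  have hP4 := h.graphP4_induce_of_adj (hK k.2 l.2 hkl)
    fun x (hx : x ∈ G.nonNeighborPiece K s(k, l)) =>
      ⟨hx.1 k (Sym2.mem_mk_left k l), hx.1 l (Sym2.mem_mk_right k l)⟩
  exact hP4.colorable_cliqueNum.mono (G.cliqueNum_induce_le _)

end IndFree

/-- Every `(P₂ ∪ P₄)`-free graph `G` satisfies
`χ(G) ≤ (ω(G)³ − ω(G)² + 2ω(G))/2`. -/
theorem stmt15 {V : Type*} [Fintype V] (G : SimpleGraph V)
    (h1 : IndFree graphP2P4 G) :
    G.chromaticNumber ≤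
      (((G.cliqueNum ^ 3 - G.cliqueNum ^ 2 + 2 * G.cliqueNum) / 2 : ℕ) : ℕ∞) := by
  classical
  obtain ⟨K, hK⟩ := G.maximumClique_exists
  have hcol := colorable_sum_of_iUnion_eq_univ (iUnion_nonNeighborPiece (hK.isMaximalClique K))
    (k := fun z => if z.IsDiag then 1 else G.cliqueNum) fun z => by
      split_ifs with hz
      exacts [(isIndepSet_nonNeighborPiece hK hz).colorable_induce,
        h1.colorable_induce_nonNeighborPiece hK.isClique hz]
  rw [Sym2.sum_ite_isDiag, mul_one, Fintype.card_coe, G.maximumClique_card_eq_cliqueNum K hK,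
    ← Nat.cube_sub_sq_add_two_mul_div_two] at hcol
  exact hcol.chromaticNumber_le
end

section
/- Let G be a (P4 ∪ K1)-free graph containing an induced cycle C of length 5. Then every vertex of G not on C is adjacent to at least two vertices of C. In particular, if G is a (P4 ∪ K1, C4)-free graph containing an induced 5-cycle, then G is connected. -/
open SimpleGraph

/-!
If a vertex `x` off an induced 5-cycle `v` had at most one neighbour `v k` on it, the other
four cycle vertices `v (k+1), …, v (k+4)` would form an induced `P₄` avoided by `x`, i.e. an
induced `P₄ ∪ K₁`. Hence every vertex lies on the cycle or is adjacent to it, so the graph is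
connected.
-/

open Function

section

variable {V : Type*} {G : SimpleGraph V}

lemma not_indFree_of_adj_iff {W : Type*} {H : SimpleGraph W} (f : W → V) (hf : Injective f)
    (h : ∀ a b, G.Adj (f a) (f b) ↔ H.Adj a b) : ¬ IndFree H G :=
  fun hfree => hfree.false ⟨⟨f, hf⟩, h _ _⟩

lemma graphP4K1_adj_iff (a b : Fin 5) :
    graphP4K1.Adj a b ↔ a ≠ 4 ∧ b ≠ 4 ∧ (b = a + 1 ∨ a = b + 1) := by
  simp only [graphP4K1, fromRel_adj]
  revert a b
  decide

lemma reachable_of_adj_succ {n : ℕ} {v : Fin (n + 1) → V}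
    (hadj : ∀ i, G.Adj (v i) (v (i + 1))) (i : Fin (n + 1)) : G.Reachable (v 0) (v i) := by
  induction i using Fin.induction with
  | zero => rfl
  | succ i ih => simpa [Fin.coeSucc_eq_succ] using ih.trans (hadj i.castSucc).reachable

structure IsInducedC5 (G : SimpleGraph V) (v : Fin 5 → V) : Prop where
  injective : Injective v
  adj_succ : ∀ i, G.Adj (v i) (v (i + 1))
  not_adj_add_two : ∀ i, ¬ G.Adj (v i) (v (i + 2))

namespace IsInducedC5

variable {v : Fin 5 → V}

lemma adj_iff (hv : IsInducedC5 G v) (i j : Fin 5) :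
    G.Adj (v i) (v j) ↔ j = i + 1 ∨ i = j + 1 := by
  obtain ⟨d, rfl⟩ : ∃ d, j = i + d := ⟨j - i, by abel⟩
  have hrhs : ∀ i d : Fin 5, (i + d = i + 1 ∨ i = i + d + 1) ↔ (d = 1 ∨ d = 4) := by decide
  have h3 : ∀ i : Fin 5, i + 3 + 2 = i := by decide
  have h4 : ∀ i : Fin 5, i + 4 + 1 = i := by decide
  rw [hrhs]
  fin_cases d
  · simp
  · simpa using hv.adj_succ i
  · simpa using hv.not_adj_add_two i
  · have h := hv.not_adj_add_two (i + 3)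
    rw [h3] at h
    exact iff_of_false (fun h' => h h'.symm) (by decide)
  · have h := hv.adj_succ (i + 4)
    rw [h4] at h
    exact iff_of_true h.symm (by decide)

lemma exists_ne_adj (hv : IsInducedC5 G v) (hfree : IndFree graphP4K1 G) {x : V}
    (hx : ∀ i, x ≠ v i) (k : Fin 5) : ∃ i, i ≠ k ∧ G.Adj x (v i) := by
  by_contra! hk
  have hshift : ∀ b : Fin 5, b ≠ 4 → k + (b + 1) ≠ k := by
    intro b hb
    simpa using show b + 1 ≠ 0 by revert b; decide
  let f : Fin 5 → V := fun a => if a = 4 then x else v (k + (a + 1))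
  have hf4 : f 4 = x := if_pos rfl
  have hf : ∀ a, a ≠ 4 → f a = v (k + (a + 1)) := fun a ha => if_neg ha
  refine not_indFree_of_adj_iff f ?_ ?_ hfree
  · intro a b hab
    rcases eq_or_ne a 4 with rfl | ha <;> rcases eq_or_ne b 4 with rfl | hb
    · rfl
    · rw [hf4, hf b hb] at hab
      exact absurd hab (hx _)
    · rw [hf4, hf a ha] at hab
      exact absurd hab.symm (hx _)
    · rw [hf a ha, hf b hb] at hab
      simpa using hv.injective hab
  · intro a b
    rw [graphP4K1_adj_iff]
    rcases eq_or_ne a 4 with rfl | ha <;> rcases eq_or_ne b 4 with rfl | hb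
    · simp [hf4]
    · simpa [hf4, hf b hb] using hk _ (hshift b hb)
    · simpa [hf4, hf a ha] using fun h => hk _ (hshift a ha) h.symm
    · rw [hf a ha, hf b hb, hv.adj_iff, add_assoc k (a + 1), add_assoc k (b + 1), add_right_inj,
        add_right_inj, add_left_inj, add_left_inj]
      simp [ha, hb]

lemma exists_ne_adj_adj (hv : IsInducedC5 G v) (hfree : IndFree graphP4K1 G) {x : V}
    (hx : ∀ i, x ≠ v i) : ∃ i j, i ≠ j ∧ G.Adj x (v i) ∧ G.Adj x (v j) := by
  obtain ⟨i, -, hxi⟩ := hv.exists_ne_adj hfree hx 0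
  obtain ⟨j, hji, hxj⟩ := hv.exists_ne_adj hfree hx i
  exact ⟨i, j, hji.symm, hxi, hxj⟩

lemma connected_of_indFree (hv : IsInducedC5 G v) (hfree : IndFree graphP4K1 G) :
    G.Connected := by
  refine (connected_iff_exists_forall_reachable G).2 ⟨v 0, fun x => ?_⟩
  by_cases hx : ∀ i, x ≠ v i
  · obtain ⟨i, -, -, hxi, -⟩ := hv.exists_ne_adj_adj hfree hx
    exact (reachable_of_adj_succ hv.adj_succ i).trans hxi.symm.reachable
  · push Not at hx
    obtain ⟨i, rfl⟩ := hx
    exact reachable_of_adj_succ hv.adj_succ i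

end IsInducedC5

end

theorem stmt16_general {V : Type*} (G : SimpleGraph V)
    (hfree : IndFree graphP4K1 G)
    (v : Fin 5 → V) (hinj : Function.Injective v)
    (hadj : ∀ i : Fin 5, G.Adj (v i) (v (i + 1)))
    (hnadj : ∀ i : Fin 5, ¬ G.Adj (v i) (v (i + 2))) :
    (∀ x : V, (∀ i : Fin 5, x ≠ v i) →
      ∃ i j : Fin 5, i ≠ j ∧ G.Adj x (v i) ∧ G.Adj x (v j)) ∧
    (IndFree graphC4 G → G.Connected) := by
  have hv : IsInducedC5 G v := ⟨hinj, hadj, hnadj⟩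
  exact ⟨fun _ hx => hv.exists_ne_adj_adj hfree hx, fun _ => hv.connected_of_indFree hfree⟩

/-- In a `(P₄ ∪ K₁)`-free graph containing an induced 5-cycle `C`,
every vertex off `C` has at least two neighbors on `C`; in particular a
`(P₄ ∪ K₁, C₄)`-free graph containing an induced 5-cycle is connected. -/
theorem stmt16 {V : Type*} [Fintype V] (G : SimpleGraph V)
    (hfree : IndFree graphP4K1 G)
    (v : Fin 5 → V) (hinj : Function.Injective v)
    (hadj : ∀ i : Fin 5, G.Adj (v i) (v (i + 1)))
    (hnadj : ∀ i : Fin 5, ¬ G.Adj (v i) (v (i + 2))) :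
    (∀ x : V, (∀ i : Fin 5, x ≠ v i) →
      ∃ i j : Fin 5, i ≠ j ∧ G.Adj x (v i) ∧ G.Adj x (v j)) ∧
    (IndFree graphC4 G → G.Connected) :=
  stmt16_general G hfree v hinj hadj hnadj
end

section
/- Let G be a (P4 ∪ K1, C4)-free graph containing an induced cycle C of length 5. Then for every vertex x of G not on C, the subgraph induced by the neighbors of x on C is isomorphic to K2, to P3, or to C5 (i.e., x has exactly two consecutive neighbors on C, exactly three consecutive neighbors on C, or is adjacent to all five vertices of C). -/
open SimpleGraph

/-! Let `N ⊆ ℤ/5` be the set of positions of `C` adjacent to `x`. If `x` sees `v i` and `v (i+2)`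
but not `v (i+1)`, then `x, v i, v (i+1), v (i+2)` is an induced `C₄`; so `N` fills every gap of
length two. If `x` sees none of four consecutive vertices of `C`, they form an induced `P₄` which
together with `x` is an induced `P₄ ∪ K₁`. The only subsets of `ℤ/5` with these two properties are
the arcs of length two, three and five. -/

theorem IndFree.not_forall_adj_iff {W V : Type*} {H : SimpleGraph W} {G : SimpleGraph V}
    (hfree : IndFree H G) {f : W → V} (hf : Function.Injective f) :
    ¬ ∀ i j, G.Adj (f i) (f j) ↔ H.Adj i j :=
  fun h => hfree.false ⟨⟨f, hf⟩, h _ _⟩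

namespace IndFree

variable {V : Type*} {G : SimpleGraph V}

theorem adj_of_cycle4 (hfree : IndFree graphC4 G) {a b c d : V}
    (hab : G.Adj a b) (hbc : G.Adj b c) (hcd : G.Adj c d) (hda : G.Adj d a)
    (hbd : ¬ G.Adj b d) (hac : a ≠ c) (hbd' : b ≠ d) : G.Adj a c := by
  by_contra hac'
  have hinj : Function.Injective ![a, b, c, d] := by
    rw [← List.nodup_ofFn]
    simp [hab.ne, hbc.ne, hcd.ne, hda.ne', hac, hbd']
  refine hfree.not_forall_adj_iff hinj fun i j => ?_
  fin_cases i <;> fin_cases j <;>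
    simp [graphC4] <;> grind [G.adj_comm]

theorem exists_adj_of_path4 (hfree : IndFree graphP4K1 G) {a b c d e : V}
    (hab : G.Adj a b) (hbc : G.Adj b c) (hcd : G.Adj c d)
    (hac : ¬ G.Adj a c) (had : ¬ G.Adj a d) (hbd : ¬ G.Adj b d)
    (hac' : a ≠ c) (had' : a ≠ d) (hbd' : b ≠ d)
    (hea : e ≠ a) (heb : e ≠ b) (hec : e ≠ c) (hed : e ≠ d) :
    G.Adj e a ∨ G.Adj e b ∨ G.Adj e c ∨ G.Adj e d := by
  by_contra! he
  obtain ⟨hea', heb', hec', hed'⟩ := he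
  have hinj : Function.Injective ![a, b, c, d, e] := by
    rw [← List.nodup_ofFn]
    simp [hab.ne, hbc.ne, hcd.ne, hac', had', hbd', hea.symm, heb.symm, hec.symm, hed.symm]
  refine hfree.not_forall_adj_iff hinj fun i j => ?_
  fin_cases i <;> fin_cases j <;>
    simp [graphP4K1] <;> grind [G.adj_comm]

end IndFree

theorem fin5_consecutive_of_gap_closed_of_covering (f : Fin 5 → Bool)
    (hgap : ∀ i, f i → f (i + 2) → f (i + 1))
    (hcover : ∀ s, f s ∨ f (s + 1) ∨ f (s + 2) ∨ f (s + 3)) :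
    (∃ i : Fin 5, ∀ j : Fin 5, f j ↔ (j = i ∨ j = i + 1)) ∨
      (∃ i : Fin 5, ∀ j : Fin 5, f j ↔ (j = i ∨ j = i + 1 ∨ j = i + 2)) ∨
      (∀ j : Fin 5, f j) := by
  revert f
  decide

theorem stmt17_general {V : Type*} (G : SimpleGraph V)
    (hfree1 : IndFree graphP4K1 G) (hfree2 : IndFree graphC4 G)
    (v : Fin 5 → V) (hinj : Function.Injective v)
    (hadj : ∀ i : Fin 5, G.Adj (v i) (v (i + 1)))
    (hnadj : ∀ i : Fin 5, ¬ G.Adj (v i) (v (i + 2))) :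
    ∀ x : V, (∀ i : Fin 5, x ≠ v i) →
      (∃ i : Fin 5, ∀ j : Fin 5, G.Adj x (v j) ↔ (j = i ∨ j = i + 1)) ∨
      (∃ i : Fin 5, ∀ j : Fin 5, G.Adj x (v j) ↔ (j = i ∨ j = i + 1 ∨ j = i + 2)) ∨
      (∀ j : Fin 5, G.Adj x (v j)) := by
  classical
  intro x hx
  have hadj2 (i : Fin 5) : G.Adj (v (i + 1)) (v (i + 2)) := by
    simpa [show i + 1 + 1 = i + 2 by grind] using hadj (i + 1)
  have hadj3 (i : Fin 5) : G.Adj (v (i + 2)) (v (i + 3)) := by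
    simpa [show i + 2 + 1 = i + 3 by grind] using hadj (i + 2)
  have hgap (i : Fin 5) (hi : G.Adj x (v i)) (hi2 : G.Adj x (v (i + 2))) :
      G.Adj x (v (i + 1)) :=
    hfree2.adj_of_cycle4 hi (hadj i) (hadj2 i) hi2.symm (hnadj i) (hx _) (hinj.ne (by simp))
  have hcover (s : Fin 5) :
      G.Adj x (v s) ∨ G.Adj x (v (s + 1)) ∨ G.Adj x (v (s + 2)) ∨ G.Adj x (v (s + 3)) := by
    refine hfree1.exists_adj_of_path4 (hadj s) (hadj2 s) (hadj3 s) (hnadj s) ?_ ?_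
      (hinj.ne (by simp)) (hinj.ne (by simp)) (hinj.ne (by grind)) (hx _) (hx _) (hx _) (hx _)
    · simpa [G.adj_comm, show s + 3 + 2 = s by grind] using hnadj (s + 3)
    · simpa [show s + 1 + 2 = s + 3 by grind] using hnadj (s + 1)
  simpa using fin5_consecutive_of_gap_closed_of_covering (fun j => decide (G.Adj x (v j)))
    (by simpa using hgap) (by simpa using hcover)

/-- In a `(P₄ ∪ K₁, C₄)`-free graph containing an induced 5-cycle `C`,
every vertex off `C` sees on `C` exactly two consecutive vertices, exactly three
consecutive vertices, or all five vertices. -/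
theorem stmt17 {V : Type*} [Fintype V] (G : SimpleGraph V)
    (hfree1 : IndFree graphP4K1 G) (hfree2 : IndFree graphC4 G)
    (v : Fin 5 → V) (hinj : Function.Injective v)
    (hadj : ∀ i : Fin 5, G.Adj (v i) (v (i + 1)))
    (hnadj : ∀ i : Fin 5, ¬ G.Adj (v i) (v (i + 2))) :
    ∀ x : V, (∀ i : Fin 5, x ≠ v i) →
      (∃ i : Fin 5, ∀ j : Fin 5, G.Adj x (v j) ↔ (j = i ∨ j = i + 1)) ∨
      (∃ i : Fin 5, ∀ j : Fin 5, G.Adj x (v j) ↔ (j = i ∨ j = i + 1 ∨ j = i + 2)) ∨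
      (∀ j : Fin 5, G.Adj x (v j)) :=
  stmt17_general G hfree1 hfree2 v hinj hadj hnadj
end

section
/- Let G be a (2K2, K1+C4)-free graph containing an induced 4-cycle C with vertices v1, v2, v3, v4 in cyclic order. Let Y1 be the set of vertices outside C whose neighborhood in {v1, v2, v3, v4} is exactly {v1, v3}. Then Y1 can be partitioned into a clique and an independent set (in particular, the subgraph induced by Y1 is P3-free). -/
open SimpleGraph

/-!
Every vertex of `Y₁` is adjacent to both `v₁` and `v₃`, which are distinct and nonadjacent. If
`a - b - c` were an induced `P₃` inside `Y₁`, then `a v₁ c v₃` would be an induced 4-cycle all of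
whose vertices are adjacent to `b`, i.e. an induced wheel. So adjacency is transitive on `Y₁`,
which therefore induces a disjoint union of cliques; since `G` is `2K₂`-free, at most one of these
cliques has an edge, and the remaining vertices of `Y₁` are isolated in `Y₁`.
-/

section

variable {V : Type*} {G : SimpleGraph V}

def twoEdgesEmbedding {a b c d : V} (hab : G.Adj a b) (hcd : G.Adj c d)
    (hac : ¬ G.Adj a c) (had : ¬ G.Adj a d) (hbc : ¬ G.Adj b c) (hbd : ¬ G.Adj b d) :
    graph2K2 ↪g G :=
  have nac : a ≠ c := by rintro rfl; exact had hcd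
  have nad : a ≠ d := by rintro rfl; exact hac hcd.symm
  have nbc : b ≠ c := by rintro rfl; exact hbd hcd
  have nbd : b ≠ d := by rintro rfl; exact hbc hcd.symm
  ⟨⟨![a, b, c, d], by
      intro i j h
      fin_cases i <;> fin_cases j <;> simp_all [hab.ne, hcd.ne, hab.ne.symm, hcd.ne.symm]⟩,
    fun {i j} => by
      show G.Adj (![a, b, c, d] i) (![a, b, c, d] j) ↔ _
      fin_cases i <;> fin_cases j <;>
        simp [graph2K2, hab, hcd, hab.symm, hcd.symm, hac, had, hbc, hbd,
          mt G.adj_symm hac, mt G.adj_symm had, mt G.adj_symm hbc, mt G.adj_symm hbd]⟩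

def wheelEmbedding {a b c d w : V} (hab : G.Adj a b) (hbc : G.Adj b c) (hcd : G.Adj c d)
    (hda : G.Adj d a) (hac : ¬ G.Adj a c) (hbd : ¬ G.Adj b d) (nac : a ≠ c) (nbd : b ≠ d)
    (hwa : G.Adj w a) (hwb : G.Adj w b) (hwc : G.Adj w c) (hwd : G.Adj w d) :
    graphWheel ↪g G :=
  ⟨⟨![a, b, c, d, w], by
      intro i j h
      fin_cases i <;> fin_cases j <;>
        simp_all [hab.ne, hbc.ne, hcd.ne, hda.ne, hwa.ne, hwb.ne, hwc.ne, hwd.ne, hab.ne.symm,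
          hbc.ne.symm, hcd.ne.symm, hda.ne.symm, hwa.ne.symm, hwb.ne.symm, hwc.ne.symm,
          hwd.ne.symm]⟩,
    fun {i j} => by
      show G.Adj (![a, b, c, d, w] i) (![a, b, c, d, w] j) ↔ _
      fin_cases i <;> fin_cases j <;>
        simp [graphWheel, hab, hbc, hcd, hda, hab.symm, hbc.symm, hcd.symm, hda.symm, hwa, hwb,
          hwc, hwd, hwa.symm, hwb.symm, hwc.symm, hwd.symm, hac, hbd, mt G.adj_symm hac,
          mt G.adj_symm hbd]⟩

def pathEmbedding {a b c : V} (hab : G.Adj a b) (hbc : G.Adj b c) (hac : ¬ G.Adj a c)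
    (nac : a ≠ c) : graphP3 ↪g G :=
  ⟨⟨![a, b, c], by
      intro i j h
      fin_cases i <;> fin_cases j <;> simp_all [hab.ne, hbc.ne, hab.ne.symm, hbc.ne.symm]⟩,
    fun {i j} => by
      show G.Adj (![a, b, c] i) (![a, b, c] j) ↔ _
      fin_cases i <;> fin_cases j <;>
        simp [graphP3, hab, hbc, hab.symm, hbc.symm, hac, mt G.adj_symm hac]⟩

theorem indFree_graphP3_induce_iff {S : Set V} :
    IndFree graphP3 (G.induce S) ↔
      ∀ a ∈ S, ∀ b ∈ S, ∀ c ∈ S, a ≠ c → G.Adj a b → G.Adj b c → G.Adj a c := by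
  constructor
  · intro h a ha b hb c hc nac hab hbc
    by_contra hac
    exact h.false (pathEmbedding (G := G.induce S) (a := ⟨a, ha⟩) (b := ⟨b, hb⟩) (c := ⟨c, hc⟩)
      hab hbc hac (by simpa using nac))
  · refine fun h => ⟨fun e => ?_⟩
    have adj01 : (G.induce S).Adj (e 0) (e 1) := e.map_rel_iff.mpr (by simp [graphP3])
    have adj12 : (G.induce S).Adj (e 1) (e 2) := e.map_rel_iff.mpr (by simp [graphP3])
    have nadj02 : ¬ (G.induce S).Adj (e 0) (e 2) := fun h' =>
      absurd (e.map_rel_iff.mp h') (by simp [graphP3])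
    have ne02 : (e 0 : V) ≠ e 2 := fun h' => by simpa using e.injective (Subtype.ext h')
    exact nadj02 (h _ (e 0).2 _ (e 1).2 _ (e 2).2 ne02 adj01 adj12)

theorem indFree_graphP3_induce_of_forall_adj (hW : IndFree graphWheel G) {u w : V}
    (huw : ¬ G.Adj u w) (nuw : u ≠ w) {S : Set V} (hS : ∀ x ∈ S, G.Adj x u ∧ G.Adj x w) :
    IndFree graphP3 (G.induce S) := by
  rw [indFree_graphP3_induce_iff]
  intro a ha b hb c hc nac hab hbc
  by_contra hac
  exact hW.false (wheelEmbedding (hS a ha).1 (hS c hc).1.symm (hS c hc).2 (hS a ha).2.symm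
    hac huw nac nuw hab.symm (hS b hb).1 hbc (hS b hb).2)

theorem exists_isClique_isIndep_of_indFree_graphP3 (h2K2 : IndFree graph2K2 G) {S : Set V}
    (hP3 : IndFree graphP3 (G.induce S)) :
    ∃ K I : Set V, K ∪ I = S ∧ Disjoint K I ∧ G.IsClique K ∧ IsIndep G I := by
  have adj_trans := indFree_graphP3_induce_iff.mp hP3
  set K := {x ∈ S | ∃ y ∈ S, G.Adj x y}
  refine ⟨K, S \ K, Set.union_sdiff_cancel fun x hx => hx.1, Set.disjoint_sdiff_right, ?_, ?_⟩
  · rintro x ⟨hx, a, ha, hxa⟩ y ⟨hy, b, hb, hyb⟩ nxy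
    by_contra hxy
    have hay : ¬ G.Adj a y := fun hay => hxy (adj_trans x hx a ha y hy nxy hxa hay)
    have hxb : ¬ G.Adj x b := fun hxb => hxy (adj_trans x hx b hb y hy nxy hxb hyb.symm)
    have nxb : x ≠ b := by rintro rfl; exact hxy hyb.symm
    have hab : ¬ G.Adj a b := fun hab => hxb (adj_trans x hx a ha b hb nxb hxa hab)
    exact h2K2.false (twoEdgesEmbedding hxa hyb hxy hxb hay hab)
  · rintro x ⟨hx, hxK⟩ y ⟨hy, -⟩ - hxy
    exact hxK ⟨hx, y, hy, hxy⟩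

end

theorem stmt18_general {V : Type*} (G : SimpleGraph V)
    (h1 : IndFree graph2K2 G) (h2 : IndFree graphWheel G)
    (v1 v2 v3 v4 : V) (hd : [v1, v2, v3, v4].Nodup)
    (h13 : ¬ G.Adj v1 v3)
    (Y1 : Set V)
    (hY1 : Y1 = {x | x ∉ ({v1, v2, v3, v4} : Set V) ∧
      G.Adj x v1 ∧ G.Adj x v3 ∧ ¬ G.Adj x v2 ∧ ¬ G.Adj x v4}) :
    (∃ K I : Set V, K ∪ I = Y1 ∧ Disjoint K I ∧ G.IsClique K ∧ IsIndep G I) ∧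
    IndFree graphP3 (G.induce Y1) := by
  have n13 : v1 ≠ v3 := by simp_all
  have hY1adj : ∀ x ∈ Y1, G.Adj x v1 ∧ G.Adj x v3 := by
    rw [hY1]
    exact fun x hx => ⟨hx.2.1, hx.2.2.1⟩
  have hP3 := indFree_graphP3_induce_of_forall_adj h2 h13 n13 hY1adj
  exact ⟨exists_isClique_isIndep_of_indFree_graphP3 h1 hP3, hP3⟩

/-- In a `(2K₂, K₁ + C₄)`-free graph with an induced 4-cycle
`v₁v₂v₃v₄`, the set `Y₁` of outside vertices seeing exactly `{v₁, v₃}` on the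
cycle is partitionable into a clique and an independent set (in particular it
induces a `P₃`-free subgraph). -/
theorem stmt18 {V : Type*} [Fintype V] (G : SimpleGraph V)
    (h1 : IndFree graph2K2 G) (h2 : IndFree graphWheel G)
    (v1 v2 v3 v4 : V) (hd : [v1, v2, v3, v4].Nodup)
    (h12 : G.Adj v1 v2) (h23 : G.Adj v2 v3) (h34 : G.Adj v3 v4) (h14 : G.Adj v1 v4)
    (h13 : ¬ G.Adj v1 v3) (h24 : ¬ G.Adj v2 v4)
    (Y1 : Set V)
    (hY1 : Y1 = {x | x ∉ ({v1, v2, v3, v4} : Set V) ∧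
      G.Adj x v1 ∧ G.Adj x v3 ∧ ¬ G.Adj x v2 ∧ ¬ G.Adj x v4}) :
    (∃ K I : Set V, K ∪ I = Y1 ∧ Disjoint K I ∧ G.IsClique K ∧ IsIndep G I) ∧
    IndFree graphP3 (G.induce Y1) :=
  stmt18_general G h1 h2 v1 v2 v3 v4 hd h13 Y1 hY1
end
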